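/- Let Θ be a positive semidefinite symmetric n×n matrix depending linearly on τ (i.e. Θ = τ·S with S fixed positive semidefinite). Then d/dτ [det(Θ/(τ sinh Θ))^{1/2}] = -(1/2)·tr(Θ cosh Θ/(τ sinh Θ))·det(Θ/(τ sinh Θ))^{1/2}, where matrix functions are defined by even power series. -/

import Mathlib

/-!
In an orthonormal eigenbasis of `S` everything is diagonal: the determinant is the product of the
scalar factors `g_a(τ) = τ⁻¹ · xDivSinh (τ a)` (that is, `a / sinh (τ a)` for `a > 0` and `1 / τ`
for `a = 0`) and the trace the sum of `τ⁻¹ · xCoshDivSinh (τ a)`, which is exactly the negative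
logarithmic derivative of `g_a`.
Logarithmic derivatives add over products and halve under a square root.
-/

open Real Matrix

/-- Apply a scalar function spectrally, via an orthogonal diagonalization. -/
noncomputable def matFun {n : ℕ} (U : Matrix (Fin n) (Fin n) ℝ) (d : Fin n → ℝ)
    (f : ℝ → ℝ) : Matrix (Fin n) (Fin n) ℝ :=
  U * Matrix.diagonal (fun i => f (d i)) * Uᵀ

/-- `x / sinh x`, extended by its limit `1` at `x = 0`. -/
noncomputable def xDivSinh (x : ℝ) : ℝ := if x = 0 then 1 else x / Real.sinh x

/-- `x cosh x / sinh x`, extended by its limit `1` at `x = 0`. -/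
noncomputable def xCoshDivSinh (x : ℝ) : ℝ :=
  if x = 0 then 1 else x * Real.cosh x / Real.sinh x

theorem HasDerivAt.finset_prod_of_logDeriv {ι 𝕜 𝔸 : Type*} [NontriviallyNormedField 𝕜]
    [NormedCommRing 𝔸] [NormedAlgebra 𝕜 𝔸] (s : Finset ι) {f : ι → 𝕜 → 𝔸}
    {k : ι → 𝔸} {x : 𝕜}
    (hf : ∀ i ∈ s, HasDerivAt (f i) (k i * f i x) x) :
    HasDerivAt (fun y => ∏ i ∈ s, f i y) ((∑ i ∈ s, k i) * ∏ i ∈ s, f i x) x := by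
  classical
  induction s using Finset.induction with
  | empty => simpa using hasDerivAt_const x (1 : 𝔸)
  | insert a s ha ih =>
    simp only [Finset.prod_insert ha, Finset.sum_insert ha]
    refine ((hf a (Finset.mem_insert_self a s)).fun_mul
      (ih fun i hi => hf i (Finset.mem_insert_of_mem hi))).congr_deriv ?_
    ring

theorem HasDerivAt.sqrt_of_logDeriv {g : ℝ → ℝ} {k x : ℝ} (hg : HasDerivAt g (k * g x) x)
    (hpos : 0 < g x) : HasDerivAt (fun y => √(g y)) (k / 2 * √(g x)) x := by
  convert hg.sqrt hpos.ne' using 1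
  have hsq : √(g x) * √(g x) = g x := mul_self_sqrt hpos.le
  field_simp [(sqrt_pos.mpr hpos).ne']
  linear_combination k * hsq

lemma xDivSinh_pos (x : ℝ) : 0 < xDivSinh x := by
  unfold xDivSinh
  rcases lt_trichotomy x 0 with h | rfl | h
  · rw [if_neg h.ne]
    exact div_pos_of_neg_of_neg h (sinh_neg_iff.mpr h)
  · simp
  · rw [if_neg h.ne']
    exact div_pos h (sinh_pos_iff.mpr h)

lemma hasDerivAt_inv_mul_xDivSinh {a τ : ℝ} (ha : 0 ≤ a) (hτ : 0 < τ) :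
    HasDerivAt (fun s => 1 / s * xDivSinh (s * a))
      (-(1 / τ * xCoshDivSinh (τ * a)) * (1 / τ * xDivSinh (τ * a))) τ := by
  rcases ha.eq_or_lt with rfl | ha
  · simpa [xDivSinh, xCoshDivSinh, one_div, ← sq] using hasDerivAt_inv hτ.ne'
  · have hsinh : sinh (τ * a) ≠ 0 := (sinh_pos_iff.mpr (by positivity)).ne'
    have hquot : HasDerivAt (fun s => a / sinh (s * a))
        (a * -((cosh (τ * a) * a) / sinh (τ * a) ^ 2)) τ := by
      simpa [div_eq_mul_inv] using
        (((hasDerivAt_mul_const a).sinh).inv hsinh).const_mul a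
    have hev : (fun s => 1 / s * xDivSinh (s * a)) =ᶠ[nhds τ] fun s => a / sinh (s * a) := by
      filter_upwards [eventually_ne_nhds hτ.ne'] with s hs
      rw [xDivSinh, if_neg (mul_ne_zero hs ha.ne')]
      field_simp
    refine (hquot.congr_of_eventuallyEq hev).congr_deriv ?_
    rw [xDivSinh, xCoshDivSinh, if_neg (by positivity), if_neg (by positivity)]
    field_simp

section matFun

variable {n : ℕ} {U : Matrix (Fin n) (Fin n) ℝ}

lemma det_smul_matFun (hU : U * Uᵀ = 1) (e : Fin n → ℝ) (f : ℝ → ℝ) (c : ℝ) :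
    det (c • matFun U e f) = ∏ i, c * f (e i) := by
  have hdetU : det Uᵀ * det U = 1 := by rw [← det_mul, mul_eq_one_comm.mp hU, det_one]
  rw [matFun, det_smul, det_mul, det_mul, det_diagonal, Finset.prod_mul_distrib,
    Finset.prod_const, Finset.card_univ, Fintype.card_fin, mul_right_comm, mul_comm (det U),
    mul_assoc, ← mul_assoc (det Uᵀ), hdetU, one_mul]

lemma trace_smul_matFun (hU : U * Uᵀ = 1) (e : Fin n → ℝ) (f : ℝ → ℝ) (c : ℝ) :
    trace (c • matFun U e f) = ∑ i, c * f (e i) := by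
  rw [matFun, trace_smul, trace_mul_cycle, mul_eq_one_comm.mp hU, Matrix.one_mul,
    trace_diagonal, smul_eq_mul, Finset.mul_sum]

end matFun

theorem deriv_sqrt_det_theta {n : ℕ} (U : Matrix (Fin n) (Fin n) ℝ) (d : Fin n → ℝ)
    (hU : U * Uᵀ = 1) (hd : ∀ i, 0 ≤ d i) :
    ∀ τ : ℝ, 0 < τ →
      deriv (fun s : ℝ =>
          Real.sqrt (Matrix.det ((1 / s) • matFun U (fun i => s * d i) xDivSinh))) τ =
        -(1 / 2) * Matrix.trace ((1 / τ) • matFun U (fun i => τ * d i) xCoshDivSinh) *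
          Real.sqrt (Matrix.det ((1 / τ) • matFun U (fun i => τ * d i) xDivSinh)) := by
  intro τ hτ
  simp only [det_smul_matFun hU, trace_smul_matFun hU]
  have hdet : HasDerivAt (fun s => ∏ i, 1 / s * xDivSinh (s * d i))
      ((∑ i, -(1 / τ * xCoshDivSinh (τ * d i))) * ∏ i, 1 / τ * xDivSinh (τ * d i)) τ :=
    HasDerivAt.finset_prod_of_logDeriv _ fun i _ => hasDerivAt_inv_mul_xDivSinh (hd i) hτ
  have hdet_pos : 0 < ∏ i, 1 / τ * xDivSinh (τ * d i) :=
    Finset.prod_pos fun i _ => mul_pos (by positivity) (xDivSinh_pos _)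
  rw [(hdet.sqrt_of_logDeriv hdet_pos).deriv, Finset.sum_neg_distrib]
  ring
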